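/- arXiv:2012.00808 — 4 statements merged into one kernel-verified Lean document; each statement's English description precedes it below -/
import Mathlib

section
/- Let G be a finite simple graph on n vertices and let k be an integer with 1 ≤ k ≤ n−1. Then the Laplacian spectrum of G is contained in the Laplacian spectrum of the k-token graph F_k(G): for every real number λ, the multiplicity of λ as an eigenvalue of the Laplacian matrix of F_k(G) is at least the multiplicity of λ as an eigenvalue of the Laplacian matrix of G. -/
open Finset Matrix
open scoped symmDiff

/-- The `k`-token graph of a graph `G`: vertices are the `k`-subsets of the vertex set,
two subsets `A`, `B` being adjacent iff their symmetric difference is a pair `{a, b}`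
with `a ∈ A`, `b ∈ B` and `a` adjacent to `b` in `G`. -/
def tokenGraph {V : Type*} [DecidableEq V] (G : SimpleGraph V) (k : ℕ) :
    SimpleGraph {s : Finset V // s.card = k} where
  Adj A B := ∃ a b, a ∈ A.1 ∧ b ∈ B.1 ∧ G.Adj a b ∧ A.1 ∆ B.1 = {a, b}
  symm := by
    constructor
    rintro A B ⟨a, b, ha, hb, hab, hd⟩
    exact ⟨b, a, hb, ha, hab.symm, by rw [symmDiff_comm, hd, Finset.pair_comm]⟩
  loopless := by
    constructor
    rintro A ⟨a, b, ha, hb, hab, hd⟩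
    rw [symmDiff_self] at hd
    exact Finset.insert_ne_empty a {b} hd.symm

/-- The Laplacian matrix (over `ℝ`) of a finite simple graph: `L = D - A`. -/
noncomputable def Lap {V : Type*} [Fintype V] [DecidableEq V] (G : SimpleGraph V) :
    Matrix V V ℝ :=
  letI := Classical.decRel G.Adj
  G.lapMatrix ℝ


/-!
The map `tokenSum` sending `f : V → R` to `A ↦ ∑ a ∈ A, f a` intertwines the two Laplacians:
both `(L_{F_k(G)} (tokenSum f)) A` and `∑ a ∈ A, (L_G f) a` equal the sum of `f a - f b` over the
edges `ab` of `G` leaving `A`. On the token side this is because the neighbours of `A` are exactly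
the sets `A - a + b` for such edges; on the graph side the edges inside `A` cancel in pairs.
For `0 < k < |V|` the map is injective (if all `k`-sums of `f` vanish, exchanging one element
shows that `f` is constant, and then `k • f = 0`), so it embeds every eigenspace of `L_G`
into the eigenspace of `L_{F_k(G)}` for the same eigenvalue.
-/

namespace Finset

variable {α : Type*} [DecidableEq α] {s : Finset α} {a b a' b' : α}

theorem symmDiff_pair_eq_insert_erase (ha : a ∈ s) (hb : b ∉ s) :
    s ∆ {a, b} = insert b (s.erase a) := by
  ext x
  simp only [mem_symmDiff, mem_insert, mem_erase, mem_singleton]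
  by_cases hxa : x = a <;> by_cases hxb : x = b <;> subst_vars <;> simp_all

theorem card_insert_erase_of_mem_of_notMem (ha : a ∈ s) (hb : b ∉ s) :
    #(insert b (s.erase a)) = #s := by
  rw [card_insert_of_notMem fun h => hb (mem_of_mem_erase h), card_erase_add_one ha]

theorem sum_insert_erase_of_mem_of_notMem {M : Type*} [AddCommGroup M] (f : α → M)
    (ha : a ∈ s) (hb : b ∉ s) :
    ∑ x ∈ insert b (s.erase a), f x = ∑ x ∈ s, f x - f a + f b := by
  rw [sum_insert fun h => hb (mem_of_mem_erase h), sum_erase_eq_sub ha, add_comm]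

theorem eq_and_eq_of_insert_erase_eq (ha : a ∈ s) (hb : b ∉ s) (ha' : a' ∈ s) (hb' : b' ∉ s)
    (h : insert b (s.erase a) = insert b' (s.erase a')) : a = a' ∧ b = b' := by
  rw [← symmDiff_pair_eq_insert_erase ha hb, ← symmDiff_pair_eq_insert_erase ha' hb'] at h
  have hpair := symmDiff_right_injective s h
  have ha_mem : a ∈ ({a', b'} : Finset α) := hpair ▸ mem_insert_self a {b}
  have hb_mem : b ∈ ({a', b'} : Finset α) := hpair ▸ mem_insert_of_mem (mem_singleton_self b)
  simp only [mem_insert, mem_singleton] at ha_mem hb_mem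
  refine ⟨ha_mem.resolve_right ?_, hb_mem.resolve_left ?_⟩ <;> rintro rfl <;> contradiction

end Finset

namespace SimpleGraph

variable {V R : Type*} [Fintype V] [DecidableEq V] [CommRing R] (G : SimpleGraph V)
  [DecidableRel G.Adj]

theorem lapMatrix_mulVec_apply_eq_sum_sub (f : V → R) (v : V) :
    (G.lapMatrix R *ᵥ f) v = ∑ u ∈ G.neighborFinset v, (f v - f u) := by
  rw [lapMatrix_mulVec_apply, sum_sub_distrib, sum_const, card_neighborFinset_eq_degree,
    nsmul_eq_mul]

def edgeBoundary (A : Finset V) : Finset (V × V) :=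
  {p ∈ A ×ˢ Aᶜ | G.Adj p.1 p.2}

@[simp]
theorem mem_edgeBoundary {A : Finset V} {p : V × V} :
    p ∈ G.edgeBoundary A ↔ p.1 ∈ A ∧ p.2 ∉ A ∧ G.Adj p.1 p.2 := by
  simp [edgeBoundary, and_assoc]

theorem sum_lapMatrix_mulVec_eq_sum_edgeBoundary (f : V → R) (A : Finset V) :
    ∑ a ∈ A, (G.lapMatrix R *ᵥ f) a = ∑ p ∈ G.edgeBoundary A, (f p.1 - f p.2) := by
  have hsplit : ∀ a, ∑ u ∈ G.neighborFinset a, (f a - f u) =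
      ∑ u ∈ A, (if G.Adj a u then f a - f u else 0) +
        ∑ u ∈ Aᶜ, (if G.Adj a u then f a - f u else 0) := fun a => by
    rw [sum_add_sum_compl, neighborFinset_eq_filter, sum_filter]
  have hinner : ∑ a ∈ A, ∑ u ∈ A, (if G.Adj a u then f a - f u else 0) = 0 := by
    have hswap :
        ∑ a ∈ A, ∑ u ∈ A with G.Adj a u, f u = ∑ a ∈ A, ∑ u ∈ A with G.Adj a u, f a := by
      simp only [sum_filter]
      rw [sum_comm]
      simp only [G.adj_comm]
    simp only [← sum_filter, sum_sub_distrib, hswap, sub_self]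
  simp only [lapMatrix_mulVec_apply_eq_sum_sub, hsplit, sum_add_distrib, hinner, zero_add,
    edgeBoundary, sum_filter, sum_product]

end SimpleGraph

section TokenSum

variable {R V : Type*} {k : ℕ}

variable (R V k) in
def tokenSum [CommSemiring R] : (V → R) →ₗ[R] ({s : Finset V // s.card = k} → R) where
  toFun f A := ∑ a ∈ A.1, f a
  map_add' f g := by ext A; simp [sum_add_distrib]
  map_smul' c f := by ext A; simp [mul_sum]

theorem tokenSum_apply [CommSemiring R] (f : V → R) (A : {s : Finset V // s.card = k}) :
    tokenSum R V k f A = ∑ a ∈ A.1, f a := rfl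

theorem tokenSum_injective [CommRing R] [NoZeroDivisors R] [CharZero R] [Fintype V]
    [DecidableEq V] (hk : 0 < k) (hkV : k < Fintype.card V) :
    Function.Injective (tokenSum R V k) := by
  rw [injective_iff_map_eq_zero]
  intro f hf
  have hsum : ∀ s : Finset V, #s = k → ∑ a ∈ s, f a = 0 := fun s hs => congrFun hf ⟨s, hs⟩
  -- completing a `(k - 1)`-set avoiding `u` and `v` by either of them gives `f u = f v`
  have hconst : ∀ u v, f u = f v := by
    intro u v
    have hcard : k - 1 ≤ #({u, v}ᶜ : Finset V) := by
      have := card_le_two (a := u) (b := v)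
      rw [card_compl]
      omega
    obtain ⟨S, hS, hScard⟩ := exists_subset_card_eq hcard
    have hu : u ∉ S := fun h => by simpa using hS h
    have hv : v ∉ S := fun h => by simpa using hS h
    have hSu := hsum (insert u S) (by rw [card_insert_of_notMem hu]; omega)
    have hSv := hsum (insert v S) (by rw [card_insert_of_notMem hv]; omega)
    rw [sum_insert hu] at hSu
    rw [sum_insert hv] at hSv
    linear_combination hSu - hSv
  ext u
  obtain ⟨A, -, hA⟩ := exists_subset_card_eq (s := (univ : Finset V)) (n := k)
    (by rw [card_univ]; exact hkV.le)
  have hAu := hsum A hA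
  rw [sum_congr rfl fun a _ => hconst a u, sum_const, hA, nsmul_eq_mul] at hAu
  exact (mul_eq_zero.mp hAu).resolve_left (Nat.cast_ne_zero.mpr hk.ne')

end TokenSum

section TokenGraph

variable {R V : Type*} [DecidableEq V] {k : ℕ}

theorem tokenGraph_adj_iff {G : SimpleGraph V} {A B : {s : Finset V // s.card = k}} :
    (tokenGraph G k).Adj A B ↔
      ∃ a ∈ A.1, ∃ b ∉ A.1, G.Adj a b ∧ B.1 = insert b (A.1.erase a) := by
  constructor
  · rintro ⟨a, b, ha, hb, hab, hd⟩
    have hbA : b ∉ A.1 := by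
      have hb' : b ∈ A.1 ∆ B.1 := by simp [hd]
      exact ((mem_symmDiff.mp hb').resolve_left fun h => h.2 hb).2
    refine ⟨a, ha, b, hbA, hab, ?_⟩
    rw [← symmDiff_pair_eq_insert_erase ha hbA, ← hd, symmDiff_symmDiff_cancel_left]
  · rintro ⟨a, ha, b, hb, hab, hB⟩
    refine ⟨a, b, ha, hB ▸ mem_insert_self b _, hab, ?_⟩
    rw [hB, ← symmDiff_pair_eq_insert_erase ha hb, symmDiff_symmDiff_cancel_left]

variable [Fintype V] [CommRing R] (G : SimpleGraph V) [DecidableRel G.Adj]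
  [DecidableRel (tokenGraph G k).Adj]

theorem lapMatrix_tokenGraph_mulVec_tokenSum_apply (f : V → R)
    (A : {s : Finset V // s.card = k}) :
    ((tokenGraph G k).lapMatrix R *ᵥ tokenSum R V k f) A =
      ∑ p ∈ G.edgeBoundary A.1, (f p.1 - f p.2) := by
  rw [SimpleGraph.lapMatrix_mulVec_apply_eq_sum_sub]
  symm
  refine sum_bij (fun p hp => ⟨insert p.2 (A.1.erase p.1), ?_⟩) ?_ ?_ ?_ ?_
  · rw [SimpleGraph.mem_edgeBoundary] at hp
    rw [card_insert_erase_of_mem_of_notMem hp.1 hp.2.1, A.2]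
  · intro p hp
    rw [SimpleGraph.mem_edgeBoundary] at hp
    rw [SimpleGraph.mem_neighborFinset, tokenGraph_adj_iff]
    exact ⟨p.1, hp.1, p.2, hp.2.1, hp.2.2, rfl⟩
  · intro p hp q hq hpq
    rw [SimpleGraph.mem_edgeBoundary] at hp hq
    obtain ⟨h1, h2⟩ :=
      eq_and_eq_of_insert_erase_eq hp.1 hp.2.1 hq.1 hq.2.1 (congrArg Subtype.val hpq)
    exact Prod.ext h1 h2
  · intro B hB
    rw [SimpleGraph.mem_neighborFinset, tokenGraph_adj_iff] at hB
    obtain ⟨a, ha, b, hb, hab, hB⟩ := hB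
    exact ⟨(a, b), (SimpleGraph.mem_edgeBoundary G).mpr ⟨ha, hb, hab⟩, Subtype.ext hB.symm⟩
  · intro p hp
    rw [SimpleGraph.mem_edgeBoundary] at hp
    simp only [tokenSum_apply, sum_insert_erase_of_mem_of_notMem f hp.1 hp.2.1]
    abel

theorem lapMatrix_tokenGraph_mulVec_tokenSum (f : V → R) :
    (tokenGraph G k).lapMatrix R *ᵥ tokenSum R V k f = tokenSum R V k (G.lapMatrix R *ᵥ f) := by
  ext A
  rw [lapMatrix_tokenGraph_mulVec_tokenSum_apply, tokenSum_apply,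
    SimpleGraph.sum_lapMatrix_mulVec_eq_sum_edgeBoundary]

end TokenGraph

theorem Module.End.finrank_eigenspace_le_of_injective {K M N : Type*} [Field K] [AddCommGroup M]
    [Module K M] [AddCommGroup N] [Module K N] [FiniteDimensional K N] {f : End K M}
    {g : End K N} {T : M →ₗ[K] N} (hT : Function.Injective T) (hfg : g ∘ₗ T = T ∘ₗ f) (μ : K) :
    Module.finrank K (f.eigenspace μ) ≤ Module.finrank K (g.eigenspace μ) := by
  have hmaps : ∀ x ∈ f.eigenspace μ, T x ∈ g.eigenspace μ := by
    intro x hx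
    rw [mem_eigenspace_iff] at hx ⊢
    rw [← LinearMap.comp_apply, hfg, LinearMap.comp_apply, hx, map_smul]
  exact LinearMap.finrank_le_finrank_of_injective (f := T.restrict hmaps)
    fun x y hxy => Subtype.ext (hT (congrArg Subtype.val hxy))

theorem finrank_eigenspace_lapMatrix_le_tokenGraph {K V : Type*} [Field K] [CharZero K]
    [Fintype V] [DecidableEq V] (G : SimpleGraph V) [DecidableRel G.Adj] {k : ℕ}
    [DecidableRel (tokenGraph G k).Adj] (hk : 0 < k) (hkV : k < Fintype.card V) (μ : K) :
    Module.finrank K (Module.End.eigenspace (toLin' (G.lapMatrix K)) μ) ≤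
      Module.finrank K (Module.End.eigenspace (toLin' ((tokenGraph G k).lapMatrix K)) μ) := by
  refine Module.End.finrank_eigenspace_le_of_injective (tokenSum_injective hk hkV)
    (LinearMap.ext fun f => ?_) μ
  simp only [LinearMap.comp_apply, toLin'_apply, lapMatrix_tokenGraph_mulVec_tokenSum]

/-- For a graph `G` on `n` vertices and `1 ≤ k ≤ n - 1`, the Laplacian
spectrum of `G` is contained in that of the `k`-token graph `F_k(G)`: for every real `λ`,
the multiplicity of `λ` as a Laplacian eigenvalue of `F_k(G)` is at least its multiplicity
as a Laplacian eigenvalue of `G`. -/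
theorem laplacian_spectrum_subset_token (n k : ℕ) (hk1 : 1 ≤ k) (hk2 : k ≤ n - 1)
    (G : SimpleGraph (Fin n)) (lam : ℝ) :
    Module.finrank ℝ (Module.End.eigenspace (Matrix.toLin' (Lap G)) lam) ≤
      Module.finrank ℝ (Module.End.eigenspace (Matrix.toLin' (Lap (tokenGraph G k))) lam) := by
  classical
  exact finrank_eigenspace_lapMatrix_le_tokenGraph G hk1 (by rw [Fintype.card_fin]; omega) lam
end

section
/- Let G be a finite simple graph on vertex set [n] = {1,…,n} and let k be an integer with 1 ≤ k ≤ n−1. Let L₁ be the Laplacian matrix of G, let L_k be the Laplacian matrix of the k-token graph F_k(G), and let B be the (n;k)-binomial matrix. Then Bᵀ L_k B = C(n−2, k−1) · L₁. -/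
open Finset Matrix
open scoped symmDiff

/-- The `(n;k)`-binomial matrix: rows indexed by the `k`-subsets of `Fin n`,
columns by elements of `Fin n`; entry is `1` iff the element lies in the subset. -/
def binMatrix (n k : ℕ) : Matrix {s : Finset (Fin n) // s.card = k} (Fin n) ℝ :=
  Matrix.of fun A j => if j ∈ A.1 then 1 else 0

/-! Both sides are compared as bilinear forms. The Laplacian form is
`xᵀ L y = ½ ∑_{a ∼ b} (x a - x b) (y a - y b)`, and `B x` sends a `k`-set to the sum of `x`
over it. The ordered edges of `F_k(G)` are exactly the pairs `(S ∪ {a}, S ∪ {b})` with `a ∼ b`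
in `G` and `S` a `(k - 1)`-subset of `V ∖ {a, b}`; along such an edge `B x` changes by
`x a - x b`, so every ordered edge of `G` is counted `C(n - 2, k - 1)` times. -/

namespace SimpleGraph

variable {V : Type*} [Fintype V] [DecidableEq V] (G : SimpleGraph V) [DecidableRel G.Adj]

theorem lapMatrix_mulVec_apply_eq_sum {R : Type*} [NonAssocRing R] (y : V → R) (i : V) :
    (G.lapMatrix R *ᵥ y) i = ∑ j ∈ G.neighborFinset i, (y i - y j) := by
  rw [lapMatrix_mulVec_apply, sum_sub_distrib, sum_const, card_neighborFinset_eq_degree,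
    nsmul_eq_mul]

theorem dotProduct_lapMatrix_mulVec {R : Type*} [Field R] [CharZero R] (x y : V → R) :
    x ⬝ᵥ (G.lapMatrix R *ᵥ y) =
      (∑ i, ∑ j, if G.Adj i j then (x i - x j) * (y i - y j) else 0) / 2 := by
  have h : x ⬝ᵥ (G.lapMatrix R *ᵥ y) =
      ∑ i, ∑ j, if G.Adj i j then x i * (y i - y j) else 0 := by
    simp_rw [dotProduct, lapMatrix_mulVec_apply_eq_sum, mul_sum, neighborFinset_eq_filter,
      sum_filter]
  have h' : x ⬝ᵥ (G.lapMatrix R *ᵥ y) =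
      ∑ i, ∑ j, if G.Adj i j then x j * (y j - y i) else 0 := by
    rw [h, sum_comm]
    simp_rw [G.adj_comm]
  rw [eq_div_iff two_ne_zero, mul_two]
  nth_rw 1 [h]
  rw [h', ← sum_add_distrib]
  refine sum_congr rfl fun i _ => ?_
  rw [← sum_add_distrib]
  refine sum_congr rfl fun j _ => ?_
  split_ifs <;> ring

end SimpleGraph

namespace Finset

variable {V : Type*} [DecidableEq V]

theorem eq_insert_inter_of_symmDiff_eq_pair {A B : Finset V} {a b : V}
    (ha : a ∈ A) (hb : b ∈ B) (hd : A ∆ B = {a, b}) :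
    a ∉ B ∧ b ∉ A ∧ A = insert a (A ∩ B) ∧ B = insert b (A ∩ B) := by
  have hmem : ∀ x, x ∈ A ∆ B ↔ x = a ∨ x = b := by simp [hd]
  have haB : a ∉ B := fun h => by simpa [mem_symmDiff, ha, h] using (hmem a).2 (Or.inl rfl)
  have hbA : b ∉ A := fun h => by simpa [mem_symmDiff, hb, h] using (hmem b).2 (Or.inr rfl)
  refine ⟨haB, hbA, ?_, ?_⟩ <;> ext x <;> have := hmem x <;>
    simp only [mem_symmDiff, mem_insert, mem_inter] at this ⊢ <;> grind

theorem insert_symmDiff_insert {S : Finset V} {a b : V} (ha : a ∉ S) (hb : b ∉ S)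
    (hab : a ≠ b) : insert a S ∆ insert b S = {a, b} := by
  ext x
  simp only [mem_symmDiff, mem_insert, mem_singleton]
  grind

theorem eq_of_insert_eq_insert_of_ne {S S' : Finset V} {a b a' b' : V}
    (ha : a ∉ S) (hb : b ∉ S) (hab : a ≠ b) (ha' : a' ∉ S') (hb' : b' ∉ S')
    (hA : insert a S = insert a' S') (hB : insert b S = insert b' S') :
    a = a' ∧ b = b' ∧ S = S' := by
  have hA' := Finset.ext_iff.1 hA
  have hB' := Finset.ext_iff.1 hB
  have haa : a = a' := by grind [hA' a, hB' a]
  have hbb : b = b' := by grind [hA' b, hB' b]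
  subst haa hbb
  exact ⟨rfl, rfl, by simpa [erase_insert ha, erase_insert ha'] using congrArg (·.erase a) hA⟩

variable [Fintype V]

theorem mem_powersetCard_compl_pair {S : Finset V} {a b : V} {m : ℕ} :
    S ∈ powersetCard m ({a, b} : Finset V)ᶜ ↔ a ∉ S ∧ b ∉ S ∧ #S = m := by
  rw [mem_powersetCard, subset_compl_comm, insert_subset_iff, singleton_subset_iff, mem_compl,
    mem_compl, and_assoc]

theorem card_powersetCard_compl_pair {a b : V} (hab : a ≠ b) (m : ℕ) :
    #(powersetCard m ({a, b} : Finset V)ᶜ) = (Fintype.card V - 2).choose m := by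
  rw [card_powersetCard, card_compl, card_pair hab]

end Finset

section TokenGraph

variable {V : Type*} [DecidableEq V] (G : SimpleGraph V) {k : ℕ}

theorem tokenGraph_adj_insert_insert {a b : V} {S : Finset V} (hab : G.Adj a b) (ha : a ∉ S)
    (hb : b ∉ S) (hA : #(insert a S) = k) (hB : #(insert b S) = k) :
    (tokenGraph G k).Adj ⟨insert a S, hA⟩ ⟨insert b S, hB⟩ :=
  ⟨a, b, mem_insert_self a S, mem_insert_self b S, hab, insert_symmDiff_insert ha hb hab.ne⟩

variable [Fintype V]

theorem card_insert_of_mem_powersetCard_compl_pair {a b c : V} {S : Finset V} (hk : 1 ≤ k)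
    (hc : c = a ∨ c = b) (hS : S ∈ powersetCard (k - 1) ({a, b} : Finset V)ᶜ) :
    #(insert c S) = k := by
  obtain ⟨ha, hb, hS⟩ := mem_powersetCard_compl_pair.1 hS
  rw [card_insert_of_notMem (by rcases hc with rfl | rfl <;> assumption), hS]
  omega

theorem exists_insert_of_tokenGraph_adj (hk : 1 ≤ k) {A B : {s : Finset V // #s = k}}
    (h : (tokenGraph G k).Adj A B) :
    ∃ a b S, G.Adj a b ∧ S ∈ powersetCard (k - 1) ({a, b} : Finset V)ᶜ ∧
      A.1 = insert a S ∧ B.1 = insert b S := by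
  obtain ⟨a, b, ha, hb, hab, hd⟩ := h
  obtain ⟨haB, hbA, hA, hB⟩ := eq_insert_inter_of_symmDiff_eq_pair ha hb hd
  have haS : a ∉ A.1 ∩ B.1 := fun h => haB (mem_inter.1 h).2
  have hcard := card_insert_of_notMem haS
  rw [← hA, A.2] at hcard
  refine ⟨a, b, A.1 ∩ B.1, hab, ?_, hA, hB⟩
  exact mem_powersetCard_compl_pair.2 ⟨haS, fun h => hbA (mem_inter.1 h).1, by omega⟩

variable [DecidableRel G.Adj] [DecidableRel (tokenGraph G k).Adj]

theorem sum_tokenGraph_adj {M : Type*} [AddCommMonoid M] (hk : 1 ≤ k)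
    (f : Finset V → Finset V → M) :
    ∑ A, ∑ B, (if (tokenGraph G k).Adj A B then f A.1 B.1 else 0) =
      ∑ a, ∑ b, if G.Adj a b then
        ∑ S ∈ powersetCard (k - 1) ({a, b} : Finset V)ᶜ, f (insert a S) (insert b S) else 0 := by
  calc _ = ∑ p ∈ univ.filter fun p : _ × _ => (tokenGraph G k).Adj p.1 p.2, f p.1.1 p.2.1 := by
        rw [sum_filter, ← univ_product_univ, sum_product]
    _ = ∑ x ∈ (univ.filter fun q : V × V => G.Adj q.1 q.2).sigma
          (fun q => powersetCard (k - 1) ({q.1, q.2} : Finset V)ᶜ),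
          f (insert x.1.1 x.2) (insert x.1.2 x.2) := by
        symm
        refine sum_bij (fun x hx =>
            (⟨insert x.1.1 x.2, card_insert_of_mem_powersetCard_compl_pair hk (Or.inl rfl)
              (mem_sigma.1 hx).2⟩,
            ⟨insert x.1.2 x.2, card_insert_of_mem_powersetCard_compl_pair hk (Or.inr rfl)
              (mem_sigma.1 hx).2⟩))
          ?_ ?_ ?_ fun _ _ => rfl
        · rintro ⟨⟨a, b⟩, S⟩ hx
          simp only [mem_sigma, mem_filter, mem_univ, true_and, mem_powersetCard_compl_pair] at hx
          obtain ⟨hab, ha, hb, -⟩ := hx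
          simpa only [mem_filter, mem_univ, true_and] using
            tokenGraph_adj_insert_insert G hab ha hb _ _
        · rintro ⟨⟨a, b⟩, S⟩ hx ⟨⟨a', b'⟩, S'⟩ hx' h
          simp only [mem_sigma, mem_filter, mem_univ, true_and,
            mem_powersetCard_compl_pair] at hx hx'
          simp only [Prod.mk.injEq, Subtype.mk.injEq] at h
          obtain ⟨rfl, rfl, rfl⟩ := eq_of_insert_eq_insert_of_ne hx.2.1 hx.2.2.1 hx.1.ne
            hx'.2.1 hx'.2.2.1 h.1 h.2
          rfl
        · rintro ⟨A, B⟩ hp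
          obtain ⟨a, b, S, hab, hS, hA, hB⟩ :=
            exists_insert_of_tokenGraph_adj G hk (mem_filter.1 hp).2
          refine ⟨⟨(a, b), S⟩, mem_sigma.2 ⟨mem_filter.2 ⟨mem_univ _, hab⟩, hS⟩, ?_⟩
          exact Prod.ext (Subtype.ext hA.symm) (Subtype.ext hB.symm)
    _ = _ := by rw [sum_sigma, sum_filter, ← univ_product_univ, sum_product]

theorem sum_tokenGraph_adj_mul_sub {R : Type*} [CommRing R] (hk : 1 ≤ k) (x y : V → R) :
    ∑ A, ∑ B, (if (tokenGraph G k).Adj A B then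
        (∑ i ∈ A.1, x i - ∑ i ∈ B.1, x i) * (∑ i ∈ A.1, y i - ∑ i ∈ B.1, y i) else 0) =
      (Fintype.card V - 2).choose (k - 1) *
        ∑ a, ∑ b, if G.Adj a b then (x a - x b) * (y a - y b) else 0 := by
  rw [sum_tokenGraph_adj G hk fun A B => (∑ i ∈ A, x i - ∑ i ∈ B, x i) *
    (∑ i ∈ A, y i - ∑ i ∈ B, y i), mul_sum]
  refine sum_congr rfl fun a _ => ?_
  rw [mul_sum]
  refine sum_congr rfl fun b _ => ?_
  split_ifs with hab
  · rw [← card_powersetCard_compl_pair hab.ne, ← nsmul_eq_mul, ← sum_const]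
    refine sum_congr rfl fun S hS => ?_
    obtain ⟨ha, hb, -⟩ := mem_powersetCard_compl_pair.1 hS
    rw [sum_insert ha, sum_insert hb, sum_insert ha, sum_insert hb]
    ring
  · rw [mul_zero]

end TokenGraph

theorem binMatrix_mulVec_apply {n k : ℕ} (x : Fin n → ℝ) (A : {s : Finset (Fin n) // #s = k}) :
    (binMatrix n k *ᵥ x) A = ∑ i ∈ A.1, x i := by
  simp [binMatrix, mulVec, dotProduct, ite_mul, sum_ite_mem]

theorem binMatrix_conj_lap_token_general (n k : ℕ) (hk1 : 1 ≤ k)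
    (G : SimpleGraph (Fin n)) :
    (binMatrix n k)ᵀ * Lap (tokenGraph G k) * binMatrix n k =
      ((n - 2).choose (k - 1) : ℝ) • Lap G := by
  classical
  refine (toLinearMap₂' ℝ (S₁ := ℝ) (S₂ := ℝ)).injective (LinearMap.ext₂ fun x y => ?_)
  rw [toLinearMap₂'_apply', toLinearMap₂'_apply', smul_mulVec, dotProduct_smul, ← mulVec_mulVec,
    ← mulVec_mulVec, dotProduct_transpose_mulVec, dotProduct_comm, Lap, Lap,
    G.dotProduct_lapMatrix_mulVec, SimpleGraph.dotProduct_lapMatrix_mulVec]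
  simp only [binMatrix_mulVec_apply]
  rw [sum_tokenGraph_adj_mul_sub G hk1, Fintype.card_fin, smul_eq_mul, mul_div_assoc]

/-- `Bᵀ L_k B = C(n-2, k-1) L₁`, where `L₁` is the Laplacian of `G`,
`L_k` is the Laplacian of `F_k(G)`, and `B` is the `(n;k)`-binomial matrix. -/
theorem binMatrix_conj_lap_token (n k : ℕ) (hk1 : 1 ≤ k) (hk2 : k ≤ n - 1)
    (G : SimpleGraph (Fin n)) :
    (binMatrix n k)ᵀ * Lap (tokenGraph G k) * binMatrix n k =
      ((n - 2).choose (k - 1) : ℝ) • Lap G :=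
  binMatrix_conj_lap_token_general n k hk1 G
end

section
/- Let G be a finite simple graph on vertex set [n] and let k₁, k₂ be integers with 1 ≤ k₁ ≤ k₂ ≤ n. Let L_{k₁} and L_{k₂} be the Laplacian matrices of the token graphs F_{k₁}(G) and F_{k₂}(G), and let B be the (n;k₂,k₁)-binomial matrix. Then B L_{k₁} = L_{k₂} B. -/
open Finset Matrix
open scoped symmDiff

/-- The `(n;k₂,k₁)`-binomial matrix: rows indexed by the `k₂`-subsets, columns by the
`k₁`-subsets of `Fin n`; entry is `1` iff the column subset is contained in the row subset. -/
def binMatrix2 (n k₂ k₁ : ℕ) :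
    Matrix {s : Finset (Fin n) // s.card = k₂} {s : Finset (Fin n) // s.card = k₁} ℝ :=
  Matrix.of fun A X => if X.1 ⊆ A.1 then 1 else 0

/-!
Summing over the darts `(a, b)` of `G`, `2 L_k = ∑ (1 - P_{ab})`, where `P_{ab}` is the permutation
matrix of the transposition `(a b)` acting on `k`-subsets: two distinct `k`-subsets are exchanged
by `(a b)` exactly when they are adjacent in `F_k(G)` through the edge `ab`, which is seen by its two
darts, and both sides have zero row sums, so they also agree on the diagonal. The binomial matrix
is invariant under every permutation `σ` of `[n]`, because `σ⁻¹ X ⊆ A ↔ X ⊆ σ A`; hence it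
intertwines `P_{ab}` on `k₁`-subsets with `P_{ab}` on `k₂`-subsets, and therefore `L_{k₁}` with
`L_{k₂}`.
-/

namespace Finset

variable {V : Type*} [DecidableEq V] {s t : Finset V} {a b : V}

theorem map_swap_eq_self_iff : s.map (Equiv.swap a b).toEmbedding = s ↔ (a ∈ s ↔ b ∈ s) := by
  constructor
  · intro h
    simpa [mem_map_equiv, Iff.comm] using congrArg (a ∈ ·) h
  · intro h
    ext x
    rw [mem_map_equiv, Equiv.symm_swap]
    rcases eq_or_ne x a with rfl | hxa
    · rw [Equiv.swap_apply_left, h]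
    rcases eq_or_ne x b with rfl | hxb
    · rw [Equiv.swap_apply_right, h]
    rw [Equiv.swap_apply_of_ne_of_ne hxa hxb]

theorem symmDiff_map_swap (h : s.map (Equiv.swap a b).toEmbedding ≠ s) :
    s ∆ s.map (Equiv.swap a b).toEmbedding = {a, b} := by
  rw [Ne, map_swap_eq_self_iff] at h
  ext x
  rw [mem_symmDiff, mem_map_equiv, Equiv.symm_swap, mem_insert, mem_singleton]
  rcases eq_or_ne x a with rfl | hxa
  · rw [Equiv.swap_apply_left]
    tauto
  rcases eq_or_ne x b with rfl | hxb
  · rw [Equiv.swap_apply_right]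
    tauto
  rw [Equiv.swap_apply_of_ne_of_ne hxa hxb]
  tauto

theorem map_swap_eq_of_symmDiff_eq (ha : a ∈ s) (hb : b ∈ t) (h : s ∆ t = {a, b}) :
    s.map (Equiv.swap a b).toEmbedding = t := by
  have hmem : ∀ x, (x ∈ s ∧ x ∉ t ∨ x ∈ t ∧ x ∉ s) ↔ x = a ∨ x = b := fun x => by
    rw [← mem_symmDiff, h, mem_insert, mem_singleton]
  ext x
  rw [mem_map_equiv, Equiv.symm_swap]
  rcases eq_or_ne x a with rfl | hxa
  · rw [Equiv.swap_apply_left]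
    have := hmem b
    have := hmem x
    tauto
  rcases eq_or_ne x b with rfl | hxb
  · rw [Equiv.swap_apply_right]
    tauto
  rw [Equiv.swap_apply_of_ne_of_ne hxa hxb]
  have := hmem x
  tauto

end Finset

section TokenPerm

variable {V : Type*}

def tokenPerm (σ : Equiv.Perm V) (k : ℕ) : Equiv.Perm {s : Finset V // s.card = k} :=
  σ.finsetCongr.subtypeEquiv fun s => by rw [Equiv.finsetCongr_apply, card_map]

@[simp]
theorem tokenPerm_apply_coe (σ : Equiv.Perm V) {k : ℕ} (Z : {s : Finset V // s.card = k}) :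
    (tokenPerm σ k Z : Finset V) = Z.1.map σ.toEmbedding :=
  rfl

variable [DecidableEq V] {G : SimpleGraph V} {k : ℕ} {Z W : {s : Finset V // s.card = k}}
  {a b : V}

theorem map_swap_ne_of_tokenPerm_swap_eq (hZW : Z ≠ W) (h : tokenPerm (Equiv.swap a b) k Z = W) :
    Z.1.map (Equiv.swap a b).toEmbedding ≠ Z.1 := by
  rw [← tokenPerm_apply_coe, h]
  exact fun h' => hZW (Subtype.ext h').symm

theorem symmDiff_eq_of_tokenPerm_swap_eq (hZW : Z ≠ W) (h : tokenPerm (Equiv.swap a b) k Z = W) :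
    Z.1 ∆ W.1 = {a, b} := by
  rw [← Finset.symmDiff_map_swap (map_swap_ne_of_tokenPerm_swap_eq hZW h), ← h,
    tokenPerm_apply_coe]

theorem tokenGraph_adj_of_tokenPerm_swap_eq (hab : G.Adj a b) (hZW : Z ≠ W)
    (h : tokenPerm (Equiv.swap a b) k Z = W) : (tokenGraph G k).Adj Z W := by
  have hd := symmDiff_eq_of_tokenPerm_swap_eq hZW h
  have hne : ¬(a ∈ Z.1 ↔ b ∈ Z.1) :=
    Finset.map_swap_eq_self_iff.not.1 (map_swap_ne_of_tokenPerm_swap_eq hZW h)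
  have hmem : ∀ x, (x ∈ Z.1 ∧ x ∉ W.1 ∨ x ∈ W.1 ∧ x ∉ Z.1) ↔ x = a ∨ x = b := fun x => by
    rw [← Finset.mem_symmDiff, hd, Finset.mem_insert, Finset.mem_singleton]
  by_cases ha : a ∈ Z.1
  · exact ⟨a, b, ha, by have := hmem b; tauto, hab, hd⟩
  · exact ⟨b, a, by tauto, by have := hmem a; tauto, hab.symm, by rw [hd, Finset.pair_comm]⟩

theorem tokenPerm_swap_eq_of_symmDiff_eq (ha : a ∈ Z.1) (hb : b ∈ W.1)
    (h : Z.1 ∆ W.1 = {a, b}) : tokenPerm (Equiv.swap a b) k Z = W :=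
  Subtype.ext (Finset.map_swap_eq_of_symmDiff_eq ha hb h)

theorem card_dart_tokenPerm_swap_eq [Fintype V] [DecidableRel G.Adj]
    [DecidableRel (tokenGraph G k).Adj] (hZW : Z ≠ W) :
    #{d : G.Dart | tokenPerm (Equiv.swap d.fst d.snd) k Z = W} =
      if (tokenGraph G k).Adj Z W then 2 else 0 := by
  split_ifs with hadj
  · obtain ⟨a, b, ha, hb, hab, hd⟩ := hadj
    rw [← G.dart_edge_fiber_card s(a, b) hab]
    congr 1
    ext d
    simp only [Finset.mem_filter, Finset.mem_univ, true_and]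
    constructor
    · intro h
      have hd' := symmDiff_eq_of_tokenPerm_swap_eq hZW h
      rw [hd] at hd'
      have hmem : ∀ x, x = a ∨ x = b ↔ x = d.fst ∨ x = d.snd := fun x => by
        simpa using congrArg (x ∈ ·) hd'
      refine (Sym2.mem_and_mem_iff hab.ne).1 ⟨?_, ?_⟩ <;>
        simp [SimpleGraph.Dart.edge, Sym2.mem_iff, ← hmem]
    · intro h
      obtain ⟨rfl, rfl⟩ | ⟨rfl, rfl⟩ := Sym2.eq_iff.1 h
      · exact tokenPerm_swap_eq_of_symmDiff_eq ha hb hd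
      · rw [Equiv.swap_comm]
        exact tokenPerm_swap_eq_of_symmDiff_eq ha hb hd
  · rw [Finset.card_eq_zero, Finset.filter_eq_empty_iff]
    exact fun d _ h => hadj (tokenGraph_adj_of_tokenPerm_swap_eq d.adj hZW h)

end TokenPerm

theorem Matrix.eq_of_offDiag_eq_of_mulVec_one_eq_zero {n R : Type*} [Fintype n] [DecidableEq n]
    [Ring R] {M N : Matrix n n R} (hM : M *ᵥ (fun _ => 1) = 0) (hN : N *ᵥ (fun _ => 1) = 0)
    (h : ∀ i j, i ≠ j → M i j = N i j) : M = N := by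
  rw [← sub_eq_zero]
  have hD : (M - N) *ᵥ (fun _ => 1) = 0 := by rw [sub_mulVec, hM, hN, sub_zero]
  ext i j
  rcases eq_or_ne i j with rfl | hij
  · have := congrFun hD i
    rw [mulVec, dotProduct, Finset.sum_eq_single i] at this
    · simpa using this
    · intro j _ hj
      simp [h i j hj.symm]
    · simp
  · simp [h i j hij]

section Laplacian

variable {V : Type*} [Fintype V] [DecidableEq V]

theorem Lap_eq_lapMatrix (G : SimpleGraph V) [DecidableRel G.Adj] : Lap G = G.lapMatrix ℝ := by
  unfold Lap
  congr

theorem two_smul_lap_tokenGraph (G : SimpleGraph V) [DecidableRel G.Adj] (k : ℕ) :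
    (2 : ℝ) • Lap (tokenGraph G k) =
      ∑ d : G.Dart, (1 - (tokenPerm (Equiv.swap d.fst d.snd) k).permMatrix ℝ) := by
  classical
  rw [Lap_eq_lapMatrix]
  apply Matrix.eq_of_offDiag_eq_of_mulVec_one_eq_zero
  · rw [smul_mulVec, SimpleGraph.lapMatrix_mulVec_const_eq_zero, smul_zero]
  · rw [Matrix.sum_mulVec]
    refine Finset.sum_eq_zero fun d _ => ?_
    rw [sub_mulVec, one_mulVec, permMatrix_mulVec]
    exact sub_self _
  · intro Z W hZW
    simp [Matrix.sum_apply, SimpleGraph.lapMatrix, SimpleGraph.degMatrix,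
      SimpleGraph.adjMatrix_apply, PEquiv.toMatrix_apply, Finset.sum_boole, hZW,
      card_dart_tokenPerm_swap_eq hZW]

end Laplacian

theorem binMatrix2_mul_permMatrix_tokenPerm {n k₂ k₁ : ℕ} (σ : Equiv.Perm (Fin n)) :
    binMatrix2 n k₂ k₁ * (tokenPerm σ k₁).permMatrix ℝ =
      (tokenPerm σ k₂).permMatrix ℝ * binMatrix2 n k₂ k₁ := by
  rw [PEquiv.mul_toMatrix_toPEquiv, PEquiv.toMatrix_toPEquiv_mul]
  ext A X
  exact if_congr (Finset.subset_map_symm (f := σ.symm)).symm rfl rfl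

theorem binMatrix2_mul_lap_comm_general (n k₁ k₂ : ℕ)
    (G : SimpleGraph (Fin n)) :
    binMatrix2 n k₂ k₁ * Lap (tokenGraph G k₁) =
      Lap (tokenGraph G k₂) * binMatrix2 n k₂ k₁ := by
  classical
  refine smul_right_injective _ (two_ne_zero' ℝ) ?_
  dsimp only
  rw [← Matrix.mul_smul, ← Matrix.smul_mul, two_smul_lap_tokenGraph, two_smul_lap_tokenGraph,
    Matrix.mul_sum, Matrix.sum_mul]
  simp only [Matrix.mul_sub, Matrix.sub_mul, Matrix.mul_one, Matrix.one_mul,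
    binMatrix2_mul_permMatrix_tokenPerm]

/-- For `1 ≤ k₁ ≤ k₂ ≤ n` and `B` the `(n;k₂,k₁)`-binomial matrix:
`B L_{k₁} = L_{k₂} B`. -/
theorem binMatrix2_mul_lap_comm (n k₁ k₂ : ℕ) (h1 : 1 ≤ k₁) (h2 : k₁ ≤ k₂) (h3 : k₂ ≤ n)
    (G : SimpleGraph (Fin n)) :
    binMatrix2 n k₂ k₁ * Lap (tokenGraph G k₁) =
      Lap (tokenGraph G k₂) * binMatrix2 n k₂ k₁ :=
  binMatrix2_mul_lap_comm_general n k₁ k₂ G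
end

section
/- Let m ≥ 1 and let k be an integer with 1 ≤ k ≤ m. Let K_{1,m} be the star graph with center vertex 0 and leaf vertices 1,…,m. Then the k-token graph F_k(K_{1,m}) is isomorphic to the doubled Johnson graph J(m; k−1, k), i.e., the bipartite graph whose vertex set consists of all (k−1)-subsets and all k-subsets of {1,…,m}, where two vertices are adjacent if and only if one of them is a subset of the other. An isomorphism is given by sending each k-subset A of {0,1,…,m} with 0 ∈ A to the (k−1)-subset A \ {0}, and each k-subset A with 0 ∉ A to itself. -/
open Finset Matrix
open scoped symmDiff

/-- The star graph `K_{1,m}` on `Fin (m+1)`: the center `0` is adjacent to the `m` leaves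
`1, …, m`, and there are no other edges. -/
def starGraph (m : ℕ) : SimpleGraph (Fin (m + 1)) where
  Adj u v := u ≠ v ∧ (u = 0 ∨ v = 0)
  symm := ⟨fun _ _ h => ⟨h.1.symm, h.2.symm⟩⟩
  loopless := ⟨fun _ h => h.1 rfl⟩

/-- The doubled Johnson graph `J(m; k-1, k)`: vertices are the `(k-1)`-subsets and the
`k`-subsets of `{1, …, m}` (modelled as the subsets of `Fin (m+1)` avoiding `0`), two
vertices being adjacent iff one of them is (strictly) contained in the other. -/
def doubledJohnson (m k : ℕ) :
    SimpleGraph {s : Finset (Fin (m + 1)) //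
      (0 : Fin (m + 1)) ∉ s ∧ (s.card = k - 1 ∨ s.card = k)} where
  Adj A B := A ≠ B ∧ (A.1 ⊆ B.1 ∨ B.1 ⊆ A.1)
  symm := ⟨fun _ _ h => ⟨h.1.symm, h.2.symm⟩⟩
  loopless := ⟨fun _ h => h.1 rfl⟩

/-! A `k`-set moves to a neighbour in `F_k(K_{1,m})` only by a token jumping between the
center and a leaf, so after forgetting the center the leaf part either loses or gains exactly
one element; for two `k`-sets, such a strict inclusion of leaf parts also forces the center
to lie in the smaller one and not in the larger one. Erasing the center is a bijection onto
the leaf `(k-1)`- and `k`-sets, with inverse putting the center back into the `(k-1)`-sets. -/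

namespace Finset

variable {V : Type*} [DecidableEq V]

theorem symmDiff_eq_pair_iff_erase_eq {A B : Finset V} {a b : V} (ha : a ∈ A) (hb : b ∈ B)
    (hab : a ≠ b) : A ∆ B = {a, b} ↔ A.erase a = B.erase b := by
  simp only [Finset.ext_iff, mem_symmDiff, mem_insert, mem_singleton, mem_erase]
  grind

theorem erase_ssubset_erase_iff_exists {A B : Finset V} {c : V} (hAB : #A = #B) :
    A.erase c ⊂ B.erase c ↔ ∃ b ∈ B, b ≠ c ∧ c ∈ A ∧ A.erase c = B.erase b := by
  constructor
  · intro h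
    have hlt := card_lt_card h
    have hcA : c ∈ A := by
      by_contra hcA
      have := card_erase_le (s := B) (a := c)
      rw [erase_eq_of_notMem hcA] at hlt
      omega
    have hcB : c ∉ B := by
      intro hcB
      rw [card_erase_of_mem hcA, card_erase_of_mem hcB] at hlt
      omega
    obtain ⟨b, hb, hins⟩ := exists_eq_insert_iff.2 ⟨h.subset, by
      rw [card_erase_of_mem hcA, erase_eq_of_notMem hcB]
      have := card_pos.2 ⟨c, hcA⟩
      omega⟩
    rw [erase_eq_of_notMem hcB] at hins
    subst hins
    exact ⟨b, mem_insert_self b _, fun hbc => hcB (hbc ▸ mem_insert_self b _), hcA,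
      (erase_insert hb).symm⟩
  · rintro ⟨b, hbB, hbc, hcA, hAB⟩
    have hcB : c ∉ B := fun hcB => notMem_erase c A (hAB ▸ mem_erase.2 ⟨hbc.symm, hcB⟩)
    rw [erase_eq_of_notMem hcB, ← insert_erase hbB, ← hAB]
    exact ssubset_insert fun hb => notMem_erase b B (hAB ▸ hb)

def eraseCardEquiv (c : V) (k : ℕ) :
    {s : Finset V // #s = k} ≃ {s : Finset V // c ∉ s ∧ (#s = k - 1 ∨ #s = k)} where
  toFun A := ⟨A.1.erase c, notMem_erase c A.1, by
    rw [card_erase_eq_ite, A.2]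
    split_ifs <;> simp⟩
  invFun B :=
    if h : #B.1 = k then ⟨B.1, h⟩
    else ⟨insert c B.1, by have := B.2.2; rw [card_insert_of_notMem B.2.1]; omega⟩
  left_inv A := by
    by_cases hc : c ∈ A.1
    · have hk : #(A.1.erase c) ≠ k := by
        have := card_erase_lt_of_mem hc
        omega
      simp only [dif_neg hk, insert_erase hc]
    · simp only [erase_eq_of_notMem hc, A.2, dite_true]
  right_inv B := by
    by_cases hk : #B.1 = k
    · simp only [dif_pos hk, erase_eq_of_notMem B.2.1]
    · simp only [dif_neg hk, erase_insert B.2.1]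

end Finset

theorem tokenGraph_starGraph_adj_iff {m k : ℕ} {A B : {s : Finset (Fin (m + 1)) // #s = k}} :
    (tokenGraph (starGraph m) k).Adj A B ↔
      A.1.erase 0 ⊂ B.1.erase 0 ∨ B.1.erase 0 ⊂ A.1.erase 0 := by
  have hAB : #A.1 = #B.1 := A.2.trans B.2.symm
  rw [erase_ssubset_erase_iff_exists hAB, erase_ssubset_erase_iff_exists hAB.symm]
  constructor
  · rintro ⟨a, b, ha, hb, ⟨hab, rfl | rfl⟩, hd⟩
    · exact .inl ⟨b, hb, hab.symm, ha, (symmDiff_eq_pair_iff_erase_eq ha hb hab).1 hd⟩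
    · exact .inr ⟨a, ha, hab, hb, ((symmDiff_eq_pair_iff_erase_eq ha hb hab).1 hd).symm⟩
  · rintro (⟨b, hb, hb0, h0, he⟩ | ⟨a, ha, ha0, h0, he⟩)
    · exact ⟨0, b, h0, hb, ⟨hb0.symm, .inl rfl⟩,
        (symmDiff_eq_pair_iff_erase_eq h0 hb hb0.symm).2 he⟩
    · exact ⟨a, 0, ha, h0, ⟨ha0, .inr rfl⟩, (symmDiff_eq_pair_iff_erase_eq ha h0 ha0).2 he.symm⟩

theorem doubledJohnson_adj_iff {m k : ℕ} {A B : {s : Finset (Fin (m + 1)) //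
      (0 : Fin (m + 1)) ∉ s ∧ (#s = k - 1 ∨ #s = k)}} :
    (doubledJohnson m k).Adj A B ↔ A.1 ⊂ B.1 ∨ B.1 ⊂ A.1 := by
  simp only [doubledJohnson, ne_eq, Subtype.ext_iff, ssubset_iff_subset_ne]
  grind

theorem token_star_iso_doubledJohnson_general (m k : ℕ) :
    ∃ φ : tokenGraph (starGraph m) k ≃g doubledJohnson m k,
      ∀ A : {s : Finset (Fin (m + 1)) // s.card = k}, (φ A).1 = A.1.erase 0 :=
  ⟨⟨eraseCardEquiv 0 k, by
    intro A B
    rw [doubledJohnson_adj_iff, tokenGraph_starGraph_adj_iff]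
    rfl⟩, fun _ => rfl⟩

/-- For `1 ≤ k ≤ m`, the `k`-token graph of the star `K_{1,m}` is
isomorphic to the doubled Johnson graph `J(m; k-1, k)`, via the map sending a `k`-subset
`A` of `{0, 1, …, m}` to `A \ {0}` (which is `A` itself when `0 ∉ A`). -/
theorem token_star_iso_doubledJohnson (m k : ℕ) (hm : 1 ≤ m) (hk1 : 1 ≤ k) (hk2 : k ≤ m) :
    ∃ φ : tokenGraph (starGraph m) k ≃g doubledJohnson m k,
      ∀ A : {s : Finset (Fin (m + 1)) // s.card = k}, (φ A).1 = A.1.erase 0 :=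
  token_star_iso_doubledJohnson_general m k
end
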